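/- arXiv:2204.09017 — 3 statements merged into one kernel-verified Lean document; each statement's English description precedes it below -/
import Mathlib

section
/- Sharp Hausdorff–Young inequality for the QQPFT: for 1 ≤ p ≤ 2, 1/p + 1/q = 1, and f ∈ L²_ℍ(ℝ²) ∩ L^p_ℍ(ℝ²), one has ‖Q^{∧₁,∧₂}_ℍ f‖_{L^q} ≤ (2π)^{1/q - 1/p} A_p² / |B₁B₂|^{1/q} · ‖f‖_{L^p}, where A_p = (p^{1/p}/q^{1/q})^{1/2}. -/
open MeasureTheory Real
open scoped ENNReal

noncomputable section

/-- The real quaternions. -/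
abbrev ℍ := Quaternion ℝ

/-- The quaternion imaginary unit `i`. -/
def qi : ℍ := ⟨0, 1, 0, 0⟩

/-- The quaternion imaginary unit `j`. -/
def qj : ℍ := ⟨0, 0, 1, 0⟩

/-- Exponential in the quaternions. -/
def qexp (q : ℍ) : ℍ := NormedSpace.exp q

/-- A parameter tuple `∧ = (A,B,C,D,E)` with `B ≠ 0` for quadratic phase transforms. -/
structure QPParams where
  A : ℝ
  B : ℝ
  C : ℝ
  D : ℝ
  E : ℝ
  hB : B ≠ 0

/-- The QQPFT kernel with imaginary unit `i`. -/
def KerI (L : QPParams) (t ξ : ℝ) : ℍ :=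
  (1 / Real.sqrt (2 * π)) •
    qexp (-(L.A * t ^ 2 + L.B * t * ξ + L.C * ξ ^ 2 + L.D * t + L.E * ξ) • qi)

/-- The QQPFT kernel with imaginary unit `j`. -/
def KerJ (L : QPParams) (t ξ : ℝ) : ℍ :=
  (1 / Real.sqrt (2 * π)) •
    qexp (-(L.A * t ^ 2 + L.B * t * ξ + L.C * ξ ^ 2 + L.D * t + L.E * ξ) • qj)

/-- The two-sided quaternion quadratic phase Fourier transform. -/
def QQPFT (L1 L2 : QPParams) (f : ℝ × ℝ → ℍ) (ξ : ℝ × ℝ) : ℍ :=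
  ∫ t : ℝ × ℝ, KerI L1 t.1 ξ.1 * f t * KerJ L2 t.2 ξ.2

/-- The two-sided quaternion Fourier transform. -/
def QFT (f : ℝ × ℝ → ℍ) (ξ : ℝ × ℝ) : ℍ :=
  ∫ t : ℝ × ℝ, ((1 / Real.sqrt (2 * π)) • qexp (-(t.1 * ξ.1) • qi)) * f t *
    ((1 / Real.sqrt (2 * π)) • qexp (-(t.2 * ξ.2) • qj))

/-- The short time quaternion quadratic phase Fourier transform with window `g`. -/
def STQQPFT (L1 L2 : QPParams) (g f : ℝ × ℝ → ℍ) (x ξ : ℝ × ℝ) : ℍ :=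
  ∫ t : ℝ × ℝ, KerI L1 t.1 ξ.1 * (f t * star (g (t - x))) * KerJ L2 t.2 ξ.2

/-- The symmetric real scalar inner product `⟨f,g⟩ = ∫ Sc[f ḡ]`. -/
def scInner (f g : ℝ × ℝ → ℍ) : ℝ := ∫ x : ℝ × ℝ, (f x * star (g x)).re

/-- The phase factor `φ^i_{∧,r}(k,ξ)`. -/
def phiI (L : QPParams) (r k ξ : ℝ) : ℍ :=
  qexp (-(L.A * r ^ 2 * k ^ 2 + L.D * r * k + L.B * r * k * ξ
      - 4 * r ^ 2 * L.A ^ 2 * L.C * k ^ 2 / L.B ^ 2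
      - 4 * r * L.A * L.C * k * ξ / L.B - 2 * r * L.A * L.E * k / L.B) • qi)

/-- The phase factor `φ^j_{∧,r}(k,ξ)`. -/
def phiJ (L : QPParams) (r k ξ : ℝ) : ℍ :=
  qexp (-(L.A * r ^ 2 * k ^ 2 + L.D * r * k + L.B * r * k * ξ
      - 4 * r ^ 2 * L.A ^ 2 * L.C * k ^ 2 / L.B ^ 2
      - 4 * r * L.A * L.C * k * ξ / L.B - 2 * r * L.A * L.E * k / L.B) • qj)


/-!
Splitting each phase `A t² + B t ξ + C ξ² + D t + E ξ` into a chirp in `t`, the Fourier phase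
`t (B ξ)` and a chirp in `ξ` shows that, up to unimodular factors, `Q^{∧₁,∧₂}_ℍ f (ξ)` is the QFT of
a chirp-modulated copy `g` of `f` evaluated at `(B₁ ξ₁, B₂ ξ₂)`. Modulation leaves the `Lᵖ` norm
unchanged, and the dilation `ξ ↦ (B₁ ξ₁, B₂ ξ₂)` scales the `L^q` norm by `|B₁ B₂|^{-1/q}`, so the
Hausdorff–Young inequality for `g` transfers to `f`.
-/

theorem qexp_add_smul (x y : ℝ) (u : ℍ) : qexp ((x + y) • u) = qexp (x • u) * qexp (y • u) := by
  let +nondep : NormedAlgebra ℚ ℍ := .restrictScalars ℚ ℝ ℍ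
  rw [qexp, add_smul]
  exact NormedSpace.exp_add_of_commute ((Commute.refl u).smul_left x |>.smul_right y)

theorem continuous_qexp : Continuous qexp := by
  let +nondep : NormedAlgebra ℚ ℍ := .restrictScalars ℚ ℝ ℍ
  exact NormedSpace.exp_continuous

theorem norm_qexp_of_re_eq_zero {u : ℍ} (hu : u.re = 0) : ‖qexp u‖ = 1 := by
  rw [qexp, Quaternion.norm_exp, hu, NormedSpace.exp_zero, norm_one]

theorem norm_qexp_smul_qi (x : ℝ) : ‖qexp (x • qi)‖ = 1 :=
  norm_qexp_of_re_eq_zero (by rw [Quaternion.re_smul]; exact smul_zero x)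

theorem norm_qexp_smul_qj (x : ℝ) : ‖qexp (x • qj)‖ = 1 :=
  norm_qexp_of_re_eq_zero (by rw [Quaternion.re_smul]; exact smul_zero x)

theorem integral_const_mul_mul_const {α R : Type*} [MeasurableSpace α] {μ : Measure α}
    [NormedDivisionRing R] [NormedAlgebra ℝ R] [CompleteSpace R] (u v : R) (g : α → R) :
    ∫ x, u * g x * v ∂μ = u * (∫ x, g x ∂μ) * v := by
  rw [← show ∫ x, u * g x ∂μ = u * ∫ x, g x ∂μ from integral_smul u g]
  rcases eq_or_ne v 0 with rfl | hv
  · simp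
  by_cases hg : Integrable (fun x => u * g x) μ
  · exact integral_mul_const_of_integrable hg
  have hgv : ¬ Integrable (fun x => u * g x * v) μ := fun h =>
    hg (by simpa only [mul_assoc, mul_inv_cancel₀ hv, mul_one] using h.mul_const v⁻¹)
  rw [integral_undef hgv, integral_undef hg, zero_mul]

theorem map_volume_mul_prod_mul {a b : ℝ} (ha : a ≠ 0) (hb : b ≠ 0) :
    Measure.map (fun ξ : ℝ × ℝ => (a * ξ.1, b * ξ.2)) volume =
      ENNReal.ofReal |(a * b)⁻¹| • volume := by
  rw [Measure.volume_eq_prod, show (fun ξ : ℝ × ℝ => (a * ξ.1, b * ξ.2)) =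
      Prod.map (a * ·) (b * ·) from rfl,
    ← Measure.map_prod_map _ _ (measurable_const_mul a) (measurable_const_mul b),
    Real.map_volume_mul_left ha, Real.map_volume_mul_left hb, Measure.prod_smul_left,
    Measure.prod_smul_right, smul_smul, ← ENNReal.ofReal_mul (abs_nonneg _), ← abs_mul,
    mul_inv]

theorem eLpNorm_comp_mul_prod_mul {ε : Type*} [ENorm ε] {a b : ℝ} (ha : a ≠ 0) (hb : b ≠ 0)
    (F : ℝ × ℝ → ε) {p : ℝ≥0∞} (hp : p ≠ ⊤) :
    eLpNorm (fun ξ : ℝ × ℝ => F (a * ξ.1, b * ξ.2)) p volume =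
      ENNReal.ofReal |(a * b)⁻¹| ^ (1 / p.toReal) * eLpNorm F p volume := by
  rcases eq_or_ne p 0 with rfl | hp0
  · simp
  let T : (ℝ × ℝ) ≃ᵐ (ℝ × ℝ) :=
    ((Homeomorph.mulLeft₀ a ha).prodCongr (Homeomorph.mulLeft₀ b hb)).toMeasurableEquiv
  have hlintegral : ∫⁻ ξ : ℝ × ℝ, ‖F (a * ξ.1, b * ξ.2)‖ₑ ^ p.toReal =
      ENNReal.ofReal |(a * b)⁻¹| * ∫⁻ ξ, ‖F ξ‖ₑ ^ p.toReal := by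
    rw [← smul_eq_mul, ← lintegral_smul_measure, ← map_volume_mul_prod_mul ha hb]
    exact (lintegral_map_equiv (fun ξ => ‖F ξ‖ₑ ^ p.toReal) T).symm
  rw [eLpNorm_eq_lintegral_rpow_enorm_toReal hp0 hp, eLpNorm_eq_lintegral_rpow_enorm_toReal hp0 hp,
    hlintegral, ENNReal.mul_rpow_of_nonneg _ _ (by positivity)]

def chirpModulate (L1 L2 : QPParams) (f : ℝ × ℝ → ℍ) (t : ℝ × ℝ) : ℍ :=
  qexp (-(L1.A * t.1 ^ 2 + L1.D * t.1) • qi) * f t * qexp (-(L2.A * t.2 ^ 2 + L2.D * t.2) • qj)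

theorem norm_chirpModulate (L1 L2 : QPParams) (f : ℝ × ℝ → ℍ) (t : ℝ × ℝ) :
    ‖chirpModulate L1 L2 f t‖ = ‖f t‖ := by
  rw [chirpModulate, norm_mul, norm_mul, norm_qexp_smul_qi, norm_qexp_smul_qj, one_mul, mul_one]

theorem eLpNorm_chirpModulate (L1 L2 : QPParams) (f : ℝ × ℝ → ℍ) (p : ℝ≥0∞)
    (μ : Measure (ℝ × ℝ)) : eLpNorm (chirpModulate L1 L2 f) p μ = eLpNorm f p μ :=
  eLpNorm_congr_norm_ae (.of_forall (norm_chirpModulate L1 L2 f))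

theorem MeasureTheory.MemLp.chirpModulate (L1 L2 : QPParams) {f : ℝ × ℝ → ℍ} {p : ℝ≥0∞}
    {μ : Measure (ℝ × ℝ)} (hf : MemLp f p μ) : MemLp (chirpModulate L1 L2 f) p μ := by
  have hchirp₁ : Continuous fun t : ℝ × ℝ => qexp (-(L1.A * t.1 ^ 2 + L1.D * t.1) • qi) :=
    continuous_qexp.comp (by fun_prop)
  have hchirp₂ : Continuous fun t : ℝ × ℝ => qexp (-(L2.A * t.2 ^ 2 + L2.D * t.2) • qj) :=
    continuous_qexp.comp (by fun_prop)
  refine ⟨(hchirp₁.aestronglyMeasurable.mul hf.1).mul hchirp₂.aestronglyMeasurable, ?_⟩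
  rw [eLpNorm_chirpModulate]
  exact hf.2

theorem KerI_eq_mul (L : QPParams) (t ξ : ℝ) :
    KerI L t ξ = qexp (-(L.C * ξ ^ 2 + L.E * ξ) • qi) *
      ((1 / Real.sqrt (2 * π)) • qexp (-(t * (L.B * ξ)) • qi)) *
        qexp (-(L.A * t ^ 2 + L.D * t) • qi) := by
  rw [KerI, show -(L.A * t ^ 2 + L.B * t * ξ + L.C * ξ ^ 2 + L.D * t + L.E * ξ) =
      -(L.C * ξ ^ 2 + L.E * ξ) + -(t * (L.B * ξ)) + -(L.A * t ^ 2 + L.D * t) by ring,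
    qexp_add_smul, qexp_add_smul, mul_smul_comm, smul_mul_assoc]

theorem KerJ_eq_mul (L : QPParams) (t ξ : ℝ) :
    KerJ L t ξ = qexp (-(L.A * t ^ 2 + L.D * t) • qj) *
      ((1 / Real.sqrt (2 * π)) • qexp (-(t * (L.B * ξ)) • qj)) *
        qexp (-(L.C * ξ ^ 2 + L.E * ξ) • qj) := by
  rw [KerJ, show -(L.A * t ^ 2 + L.B * t * ξ + L.C * ξ ^ 2 + L.D * t + L.E * ξ) =
      -(L.A * t ^ 2 + L.D * t) + -(t * (L.B * ξ)) + -(L.C * ξ ^ 2 + L.E * ξ) by ring,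
    qexp_add_smul, qexp_add_smul, mul_smul_comm, smul_mul_assoc]

theorem QQPFT_eq_mul_QFT_chirpModulate_mul (L1 L2 : QPParams) (f : ℝ × ℝ → ℍ) (ξ : ℝ × ℝ) :
    QQPFT L1 L2 f ξ = qexp (-(L1.C * ξ.1 ^ 2 + L1.E * ξ.1) • qi) *
      QFT (chirpModulate L1 L2 f) (L1.B * ξ.1, L2.B * ξ.2) *
        qexp (-(L2.C * ξ.2 ^ 2 + L2.E * ξ.2) • qj) := by
  rw [QQPFT, QFT, ← integral_const_mul_mul_const]
  congr 1
  funext t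
  rw [KerI_eq_mul, KerJ_eq_mul, chirpModulate]
  simp only [mul_assoc]

theorem norm_QQPFT (L1 L2 : QPParams) (f : ℝ × ℝ → ℍ) (ξ : ℝ × ℝ) :
    ‖QQPFT L1 L2 f ξ‖ = ‖QFT (chirpModulate L1 L2 f) (L1.B * ξ.1, L2.B * ξ.2)‖ := by
  rw [QQPFT_eq_mul_QFT_chirpModulate_mul, norm_mul, norm_mul, norm_qexp_smul_qi,
    norm_qexp_smul_qj, one_mul, mul_one]

theorem eLpNorm_QQPFT (L1 L2 : QPParams) (f : ℝ × ℝ → ℍ) {p : ℝ≥0∞} (hp : p ≠ ⊤) :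
    eLpNorm (QQPFT L1 L2 f) p volume =
      ENNReal.ofReal |(L1.B * L2.B)⁻¹| ^ (1 / p.toReal) *
        eLpNorm (QFT (chirpModulate L1 L2 f)) p volume := by
  rw [← eLpNorm_comp_mul_prod_mul L1.hB L2.hB _ hp]
  exact eLpNorm_congr_norm_ae (.of_forall (norm_QQPFT L1 L2 f))

theorem qqpft_sharp_hausdorff_young_general (L1 L2 : QPParams) (p q : ℝ)
    (hQFT : ∀ g : ℝ × ℝ → ℍ, MemLp g (ENNReal.ofReal p) volume →
      eLpNorm (QFT g) (ENNReal.ofReal q) volume ≤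
        ENNReal.ofReal ((2 * π) ^ (1 / q - 1 / p) * (p ^ (1 / p) / q ^ (1 / q))) *
          eLpNorm g (ENNReal.ofReal p) volume)
    (f : ℝ × ℝ → ℍ) (hfp : MemLp f (ENNReal.ofReal p) volume) :
    eLpNorm (QQPFT L1 L2 f) (ENNReal.ofReal q) volume ≤
      ENNReal.ofReal ((2 * π) ^ (1 / q - 1 / p) * (p ^ (1 / p) / q ^ (1 / q)) /
          |L1.B * L2.B| ^ (1 / q)) *
        eLpNorm f (ENNReal.ofReal p) volume := by
  rcases le_or_gt q 0 with hq | hq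
  · simp [ENNReal.ofReal_eq_zero.mpr hq]
  set c := (2 * π) ^ (1 / q - 1 / p) * (p ^ (1 / p) / q ^ (1 / q))
  have hconst : ENNReal.ofReal |(L1.B * L2.B)⁻¹| ^ (1 / q) * ENNReal.ofReal c =
      ENNReal.ofReal (c / |L1.B * L2.B| ^ (1 / q)) := by
    rw [ENNReal.ofReal_rpow_of_nonneg (abs_nonneg _) (by positivity), abs_inv,
      Real.inv_rpow (abs_nonneg _), ← ENNReal.ofReal_mul (by positivity), inv_mul_eq_div]
  calc eLpNorm (QQPFT L1 L2 f) (ENNReal.ofReal q) volume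
      = ENNReal.ofReal |(L1.B * L2.B)⁻¹| ^ (1 / q) *
          eLpNorm (QFT (chirpModulate L1 L2 f)) (ENNReal.ofReal q) volume := by
        rw [eLpNorm_QQPFT L1 L2 f ENNReal.ofReal_ne_top, ENNReal.toReal_ofReal hq.le]
    _ ≤ ENNReal.ofReal |(L1.B * L2.B)⁻¹| ^ (1 / q) *
          (ENNReal.ofReal c * eLpNorm f (ENNReal.ofReal p) volume) := by
        rw [← eLpNorm_chirpModulate L1 L2 f]
        gcongr
        exact hQFT _ (hfp.chirpModulate L1 L2)
    _ = ENNReal.ofReal (c / |L1.B * L2.B| ^ (1 / q)) * eLpNorm f (ENNReal.ofReal p) volume := by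
        rw [← mul_assoc, hconst]

/-- sharp Hausdorff–Young inequality for the QQPFT, assuming the sharp
Hausdorff–Young inequality for the QFT (with `A_p² = p^(1/p)/q^(1/q)`). -/
theorem qqpft_sharp_hausdorff_young (L1 L2 : QPParams) (p q : ℝ)
    (hp1 : 1 ≤ p) (hp2 : p ≤ 2) (hpq : 1 / p + 1 / q = 1)
    (hQFT : ∀ g : ℝ × ℝ → ℍ, MemLp g (ENNReal.ofReal p) volume →
      eLpNorm (QFT g) (ENNReal.ofReal q) volume ≤
        ENNReal.ofReal ((2 * π) ^ (1 / q - 1 / p) * (p ^ (1 / p) / q ^ (1 / q))) *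
          eLpNorm g (ENNReal.ofReal p) volume)
    (f : ℝ × ℝ → ℍ) (hf2 : MemLp f 2 volume) (hfp : MemLp f (ENNReal.ofReal p) volume) :
    eLpNorm (QQPFT L1 L2 f) (ENNReal.ofReal q) volume ≤
      ENNReal.ofReal ((2 * π) ^ (1 / q - 1 / p) * (p ^ (1 / p) / q ^ (1 / q)) /
          |L1.B * L2.B| ^ (1 / q)) *
        eLpNorm f (ENNReal.ofReal p) volume :=
  qqpft_sharp_hausdorff_young_general L1 L2 p q hQFT f hfp
end
end

section
/- Scaling property of the STQQPFT: for λ ≠ 0 and f_λ(t) = (1/λ) f(t/λ), g_λ(t) = (1/λ) g(t/λ), one has (S^{∧₁,∧₂}_{ℍ,g_λ} f_λ)(x,ξ) = (S^{∧₁',∧₂'}_{ℍ,g} f)(x/λ, ξ), where ∧ₗ' = (λ²Aₗ, λBₗ, Cₗ, λDₗ, Eₗ) for l = 1,2. -/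
/-! The substitution `t = l • s` in the defining integral has Jacobian `l ^ 2`, which cancels the
factors `1 / l` carried by the dilated signal and window, while the kernels with the rescaled
parameters evaluated at `s` are the original kernels evaluated at `l • s`. -/

open MeasureTheory Real
open scoped ENNReal

noncomputable section

theorem MeasureTheory.Measure.integral_inv_abs_pow_finrank_smul_comp_inv_smul
    {E F : Type*} [NormedAddCommGroup E] [NormedSpace ℝ E] [MeasurableSpace E] [BorelSpace E]
    [FiniteDimensional ℝ E] [NormedAddCommGroup F] [NormedSpace ℝ F]
    (μ : Measure E) [μ.IsAddHaarMeasure] (φ : E → F) {l : ℝ} (hl : l ≠ 0) :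
    ∫ x, |l ^ Module.finrank ℝ E|⁻¹ • φ (l⁻¹ • x) ∂μ = ∫ x, φ x ∂μ := by
  rw [integral_smul, μ.integral_comp_inv_smul, smul_smul,
    inv_mul_cancel₀ (abs_ne_zero.2 (pow_ne_zero _ hl)), one_smul]

def QPParams.dilate (L : QPParams) {l : ℝ} (hl : l ≠ 0) : QPParams :=
  ⟨l ^ 2 * L.A, l * L.B, L.C, l * L.D, L.E, mul_ne_zero hl L.hB⟩

theorem KerI_dilate (L : QPParams) {l : ℝ} (hl : l ≠ 0) (t ξ : ℝ) :
    KerI (L.dilate hl) t ξ = KerI L (l * t) ξ := by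
  simp only [KerI, QPParams.dilate]
  congr 4
  ring

theorem KerJ_dilate (L : QPParams) {l : ℝ} (hl : l ≠ 0) (t ξ : ℝ) :
    KerJ (L.dilate hl) t ξ = KerJ L (l * t) ξ := by
  simp only [KerJ, QPParams.dilate]
  congr 4
  ring

theorem STQQPFT_integrand_dilate (L1 L2 : QPParams) (g f : ℝ × ℝ → ℍ) {l : ℝ} (hl : l ≠ 0)
    (x ξ t : ℝ × ℝ) :
    KerI L1 t.1 ξ.1 * (l⁻¹ • f (l⁻¹ • t) * star (l⁻¹ • g (l⁻¹ • (t - x)))) * KerJ L2 t.2 ξ.2 =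
      (l ^ 2)⁻¹ • (KerI (L1.dilate hl) (l⁻¹ • t).1 ξ.1 *
        (f (l⁻¹ • t) * star (g (l⁻¹ • t - l⁻¹ • x))) * KerJ (L2.dilate hl) (l⁻¹ • t).2 ξ.2) := by
  simp only [KerI_dilate, KerJ_dilate, Prod.smul_fst, Prod.smul_snd, smul_eq_mul,
    mul_inv_cancel_left₀ hl, smul_sub, Quaternion.star_smul, mul_smul_comm, smul_mul_assoc,
    smul_smul, ← sq, inv_pow]

theorem stqqpft_scaling_general (L1 L2 : QPParams) (g f : ℝ × ℝ → ℍ)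
    (l : ℝ) (hl : l ≠ 0) (x ξ : ℝ × ℝ) :
    STQQPFT L1 L2 (fun t => (1 / l) • g ((1 / l) • t)) (fun t => (1 / l) • f ((1 / l) • t))
        x ξ =
      STQQPFT ⟨l ^ 2 * L1.A, l * L1.B, L1.C, l * L1.D, L1.E, mul_ne_zero hl L1.hB⟩
        ⟨l ^ 2 * L2.A, l * L2.B, L2.C, l * L2.D, L2.E, mul_ne_zero hl L2.hB⟩
        g f ((1 / l) • x) ξ := by
  change _ = STQQPFT (L1.dilate hl) (L2.dilate hl) g f _ ξ
  have hjac : |l ^ Module.finrank ℝ (ℝ × ℝ)|⁻¹ = (l ^ 2)⁻¹ := by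
    rw [Module.finrank_prod, Module.finrank_self, one_add_one_eq_two, abs_of_nonneg (sq_nonneg l)]
  simp only [STQQPFT, one_div]
  refine Eq.trans ?_ (volume.integral_inv_abs_pow_finrank_smul_comp_inv_smul _ hl)
  simp only [hjac, STQQPFT_integrand_dilate L1 L2 g f hl]

/-- scaling property of the STQQPFT. -/
theorem stqqpft_scaling (L1 L2 : QPParams) (g f : ℝ × ℝ → ℍ)
    (hg2 : MemLp g 2 volume) (hgi : MemLp g ⊤ volume) (hf : MemLp f 2 volume)
    (l : ℝ) (hl : l ≠ 0) (x ξ : ℝ × ℝ) :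
    STQQPFT L1 L2 (fun t => (1 / l) • g ((1 / l) • t)) (fun t => (1 / l) • f ((1 / l) • t))
        x ξ =
      STQQPFT ⟨l ^ 2 * L1.A, l * L1.B, L1.C, l * L1.D, L1.E, mul_ne_zero hl L1.hB⟩
        ⟨l ^ 2 * L2.A, l * L2.B, L2.C, l * L2.D, L2.E, mul_ne_zero hl L2.hB⟩
        g f ((1 / l) • x) ξ :=
  stqqpft_scaling_general L1 L2 g f l hl x ξ
end
end

section
/- Entropy uncertainty principle for the STQQPFT: let f ∈ L²_ℍ(ℝ²) and g a quaternion window with ‖g‖_{L²}‖f‖_{L²} = 1. Then the entropy E_S(f,g,∧₁,∧₂) = -∫∫_{ℝ²×ℝ²} |(S^{∧₁,∧₂}_{ℍ,g} f)(x,ξ)|² log(|(S^{∧₁,∧₂}_{ℍ,g} f)(x,ξ)|²) dx dξ satisfies E_S(f,g,∧₁,∧₂) ≥ 2/|B₁B₂|. -/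
open MeasureTheory Real
open scoped ENNReal

noncomputable section

/-!
Both kernels have modulus `(2π)^{-1/2}`, so Cauchy–Schwarz against the translated window and
the normalisation `‖g‖₂ ‖f‖₂ = 1` bound the transform pointwise by `1/(2π)`. Hence
`-|S|² log |S|² ≥ 2 log (2π) |S|²` everywhere, and integrating with the energy identity
`∫∫ |S|² = 1/|B₁B₂|` gives `E_S ≥ 2 log (2π) / |B₁B₂| ≥ 2 / |B₁B₂|`.
-/

lemma norm_smul_qexp_of_re_eq_zero (c : ℝ) {q : ℍ} (hq : q.re = 0) : ‖c • qexp q‖ = |c| := by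
  rw [norm_smul, qexp, Quaternion.norm_exp, hq, NormedSpace.exp_zero, norm_one, mul_one,
    Real.norm_eq_abs]

lemma norm_KerI (L : QPParams) (t ξ : ℝ) : ‖KerI L t ξ‖ = 1 / √(2 * π) := by
  rw [KerI, norm_smul_qexp_of_re_eq_zero _ (by rw [Quaternion.re_smul]; simp [qi]),
    abs_of_nonneg (by positivity)]

lemma norm_KerJ (L : QPParams) (t ξ : ℝ) : ‖KerJ L t ξ‖ = 1 / √(2 * π) := by
  rw [KerJ, norm_smul_qexp_of_re_eq_zero _ (by rw [Quaternion.re_smul]; simp [qj]),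
    abs_of_nonneg (by positivity)]

section TranslationInvariant

variable {G E : Type*} [MeasurableSpace G] [AddGroup G] [MeasurableAdd G] {μ : Measure G}
  [μ.IsAddRightInvariant] [NormedAddCommGroup E]

theorem integral_norm_mul_norm_sub_le {f g : G → E} (hf : MemLp f 2 μ) (hg : MemLp g 2 μ)
    (x : G) :
    ∫ t, ‖f t‖ * ‖g (t - x)‖ ∂μ ≤ √(∫ t, ‖f t‖ ^ 2 ∂μ) * √(∫ t, ‖g t‖ ^ 2 ∂μ) := by
  have hgx : MemLp (fun t => g (t - x)) 2 μ :=
    hg.comp_measurePreserving (measurePreserving_sub_right μ x)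
  have hcs := integral_mul_norm_le_Lp_mul_Lq (μ := μ) (f := f) (g := fun t => g (t - x))
    Real.HolderConjugate.two_two (by rwa [ENNReal.ofReal_ofNat]) (by rwa [ENNReal.ofReal_ofNat])
  simp only [Real.rpow_ofNat, ← Real.sqrt_eq_rpow] at hcs
  rwa [integral_sub_right_eq_self (fun t => ‖g t‖ ^ 2) x] at hcs

end TranslationInvariant

theorem norm_STQQPFT_le (L1 L2 : QPParams) {g f : ℝ × ℝ → ℍ} (hg : MemLp g 2 volume)
    (hf : MemLp f 2 volume) (x ξ : ℝ × ℝ) :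
    ‖STQQPFT L1 L2 g f x ξ‖ ≤
      (2 * π)⁻¹ * (√(∫ t, ‖f t‖ ^ 2) * √(∫ t, ‖g t‖ ^ 2)) := by
  have hker : 1 / √(2 * π) * (1 / √(2 * π)) = (2 * π)⁻¹ := by
    rw [one_div_mul_one_div, mul_self_sqrt (by positivity), one_div]
  calc ‖STQQPFT L1 L2 g f x ξ‖
      ≤ ∫ t : ℝ × ℝ, ‖KerI L1 t.1 ξ.1 * (f t * star (g (t - x))) * KerJ L2 t.2 ξ.2‖ :=
        norm_integral_le_integral_norm _
    _ = ∫ t : ℝ × ℝ, (2 * π)⁻¹ * (‖f t‖ * ‖g (t - x)‖) := by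
        congr 1; ext t
        rw [norm_mul, norm_mul, norm_mul, norm_star, norm_KerI, norm_KerJ, ← hker]
        ring
    _ = (2 * π)⁻¹ * ∫ t : ℝ × ℝ, ‖f t‖ * ‖g (t - x)‖ := integral_const_mul _ _
    _ ≤ _ := by gcongr; exact integral_norm_mul_norm_sub_le hf hg x

lemma mul_log_le_log_mul_of_le {s c : ℝ} (hs : 0 ≤ s) (hsc : s ≤ c) :
    s * log s ≤ log c * s := by
  rcases hs.eq_or_lt with rfl | hs
  · simp
  · rw [mul_comm]
    exact mul_le_mul_of_nonneg_right (log_le_log hs hsc) hs.le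

theorem integral_mul_log_le_of_le {α : Type*} [MeasurableSpace α] {μ : Measure α} {u : α → ℝ}
    {c : ℝ} (hu : ∀ a, 0 ≤ u a) (huc : ∀ a, u a ≤ c) (hint : Integrable u μ)
    (hlog : Integrable (fun a => u a * log (u a)) μ) :
    ∫ a, u a * log (u a) ∂μ ≤ log c * ∫ a, u a ∂μ := by
  rw [← integral_const_mul]
  exact integral_mono hlog (hint.const_mul _) fun a => mul_log_le_log_mul_of_le (hu a) (huc a)

lemma one_le_log_two_mul_pi : 1 ≤ log (2 * π) := by
  rw [le_log_iff_exp_le (by positivity)]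
  linarith [exp_one_lt_d9, pi_gt_three]

theorem stqqpft_entropy_up_general (L1 L2 : QPParams) (g f : ℝ × ℝ → ℍ)
    (hg2 : MemLp g 2 volume) (hf : MemLp f 2 volume)
    (hgf : Real.sqrt (∫ t : ℝ × ℝ, ‖g t‖ ^ 2) * Real.sqrt (∫ t : ℝ × ℝ, ‖f t‖ ^ 2) = 1)
    (ha : ∫ z : (ℝ × ℝ) × (ℝ × ℝ), ‖STQQPFT L1 L2 g f z.1 z.2‖ ^ 2 =
      1 / |L1.B * L2.B|)
    (hc : Integrable (fun z : (ℝ × ℝ) × (ℝ × ℝ) =>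
      ‖STQQPFT L1 L2 g f z.1 z.2‖ ^ 2 * Real.log (‖STQQPFT L1 L2 g f z.1 z.2‖ ^ 2))
      volume) :
    -∫ z : (ℝ × ℝ) × (ℝ × ℝ),
        ‖STQQPFT L1 L2 g f z.1 z.2‖ ^ 2 * Real.log (‖STQQPFT L1 L2 g f z.1 z.2‖ ^ 2) ≥
      2 / |L1.B * L2.B| := by
  have hB : 0 < |L1.B * L2.B| := abs_pos.mpr (mul_ne_zero L1.hB L2.hB)
  have hint : Integrable (fun z : (ℝ × ℝ) × (ℝ × ℝ) => ‖STQQPFT L1 L2 g f z.1 z.2‖ ^ 2) :=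
    Integrable.of_integral_ne_zero (by rw [ha]; positivity)
  have hbound (z : (ℝ × ℝ) × (ℝ × ℝ)) : ‖STQQPFT L1 L2 g f z.1 z.2‖ ^ 2 ≤ ((2 * π)⁻¹) ^ 2 := by
    have := norm_STQQPFT_le L1 L2 hg2 hf z.1 z.2
    rw [mul_comm √_, hgf, mul_one] at this
    gcongr
  have hent := integral_mul_log_le_of_le (fun z => sq_nonneg _) hbound hint hc
  rw [ha, log_pow, log_inv] at hent
  have := mul_le_mul_of_nonneg_right one_le_log_two_mul_pi (one_div_pos.mpr hB).le
  rw [ge_iff_le, div_eq_mul_one_div]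
  push_cast at hent
  linarith

/-- entropy uncertainty principle for the STQQPFT, assuming the norm
identity, the consequence of Lieb's inequality and integrability of the entropy
integrand. -/
theorem stqqpft_entropy_up (L1 L2 : QPParams) (g f : ℝ × ℝ → ℍ)
    (hg2 : MemLp g 2 volume) (hgi : MemLp g ⊤ volume) (hf : MemLp f 2 volume)
    (hgf : Real.sqrt (∫ t : ℝ × ℝ, ‖g t‖ ^ 2) * Real.sqrt (∫ t : ℝ × ℝ, ‖f t‖ ^ 2) = 1)
    (ha : ∫ z : (ℝ × ℝ) × (ℝ × ℝ), ‖STQQPFT L1 L2 g f z.1 z.2‖ ^ 2 =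
      1 / |L1.B * L2.B|)
    (hb : ∀ q : ℝ, 2 ≤ q →
      ∫ z : (ℝ × ℝ) × (ℝ × ℝ), ‖STQQPFT L1 L2 g f z.1 z.2‖ ^ q ≤
        (2 * π) ^ (2 - q) / |L1.B * L2.B| * (2 / q) ^ 2)
    (hc : Integrable (fun z : (ℝ × ℝ) × (ℝ × ℝ) =>
      ‖STQQPFT L1 L2 g f z.1 z.2‖ ^ 2 * Real.log (‖STQQPFT L1 L2 g f z.1 z.2‖ ^ 2))
      volume) :
    -∫ z : (ℝ × ℝ) × (ℝ × ℝ),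
        ‖STQQPFT L1 L2 g f z.1 z.2‖ ^ 2 * Real.log (‖STQQPFT L1 L2 g f z.1 z.2‖ ^ 2) ≥
      2 / |L1.B * L2.B| :=
  stqqpft_entropy_up_general L1 L2 g f hg2 hf hgf ha hc
end
end
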